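/- arXiv:2510.15099 — 2 statements merged into one kernel-verified Lean document; each statement's English description precedes it below -/
import Mathlib

section
/- For every odd index i ≥ 1, the ABR base satisfies B_i = 3 · 2^{i-1}. -/
/-- The ABR base sequence: B 0 = 2, B 1 = 3, and for i ≥ 2,
    B i = 2^(i+1) - 1 - ∑_{j odd, j < i} B j. -/
def abrB : ℕ → ℕ
  | 0 => 2
  | 1 => 3
  | n + 2 =>
      2 ^ (n + 3) - 1 -
        ∑ j ∈ ((Finset.range (n + 2)).filter fun j => j % 2 = 1).attach, abrB j.1
  decreasing_by
    exact Finset.mem_range.mp (Finset.mem_filter.mp j.2).1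

/-- Extend a length-`n` bit string to all of ℕ by zeros. -/
def extBits (n : ℕ) (d : Fin n → Bool) : ℕ → Bool :=
  fun i => if h : i < n then d ⟨i, h⟩ else false

/-- The sign exponent ε: 1 iff i is even, i ≤ n - 2, d i = 1 and d (i+1) = 1. -/
def abrEps (n : ℕ) (d : ℕ → Bool) (i : ℕ) : ℕ :=
  if i % 2 = 0 ∧ i + 2 ≤ n ∧ d i = true ∧ d (i + 1) = true then 1 else 0

/-- ABR value of an n-bit string: ∑_{i<n} (-1)^{ε(i)} dᵢ Bᵢ. -/
def abrVal (n : ℕ) (d : ℕ → Bool) : ℤ :=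
  ∑ i ∈ Finset.range n, (-1) ^ abrEps n d i * (cond (d i) 1 0 : ℤ) * (abrB i : ℤ)

/-! If `S_k = B_1 + B_3 + ⋯ + B_{2k-1}`, the recurrence reads `B_{2k+1} = 4^{k+1} - 1 - S_k`, so
`S_{k+1} = S_k + B_{2k+1} = 4^{k+1} - 1` telescopes to `S_k = 4^k - 1`, and then
`B_{2k+1} = 4^{k+1} - 4^k = 3 · 4^k`. -/

open Finset

def abrOddSum (n : ℕ) : ℕ :=
  ∑ j ∈ (range n).filter (fun j => j % 2 = 1), abrB j

lemma abrB_add_two (n : ℕ) : abrB (n + 2) = 2 ^ (n + 3) - 1 - abrOddSum (n + 2) := by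
  rw [abrB, sum_attach _ abrB, abrOddSum]

lemma abrOddSum_succ (n : ℕ) :
    abrOddSum (n + 1) = abrOddSum n + if n % 2 = 1 then abrB n else 0 := by
  simp only [abrOddSum, sum_filter, sum_range_succ]

lemma abrB_two_mul_add_one_eq_sub (k : ℕ) :
    abrB (2 * k + 1) = 4 ^ (k + 1) - 1 - abrOddSum (2 * k + 1) := by
  cases k with
  | zero => simp [abrB, abrOddSum, sum_filter]
  | succ m =>
    rw [show 2 * (m + 1) + 1 = 2 * m + 1 + 2 by ring, abrB_add_two,
      show 2 * m + 1 + 3 = 2 * (m + 2) by ring, pow_mul]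
    norm_num

lemma abrOddSum_two_mul_add_one (k : ℕ) : abrOddSum (2 * k + 1) = 4 ^ k - 1 := by
  induction k with
  | zero => simp [abrOddSum, sum_filter]
  | succ k ih =>
    have hstep : abrOddSum (2 * (k + 1) + 1) = abrOddSum (2 * k + 1) + abrB (2 * k + 1) := by
      rw [show 2 * (k + 1) + 1 = 2 * k + 1 + 1 + 1 by ring, abrOddSum_succ, abrOddSum_succ]
      simp [Nat.add_mod]
    have hpos : 1 ≤ 4 ^ k := Nat.one_le_pow _ _ (by norm_num)
    rw [hstep, abrB_two_mul_add_one_eq_sub, ih, pow_succ]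
    omega

lemma abrB_two_mul_add_one (k : ℕ) : abrB (2 * k + 1) = 3 * 4 ^ k := by
  have hpos : 1 ≤ 4 ^ k := Nat.one_le_pow _ _ (by norm_num)
  rw [abrB_two_mul_add_one_eq_sub, abrOddSum_two_mul_add_one, pow_succ]
  omega

theorem abr_odd_base_general (i : ℕ) (ho : i % 2 = 1) :
    abrB i = 3 * 2 ^ (i - 1) := by
  obtain ⟨k, rfl⟩ : ∃ k, i = 2 * k + 1 := ⟨i / 2, by omega⟩
  rw [abrB_two_mul_add_one, Nat.add_sub_cancel, pow_mul]
  norm_num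

theorem abr_odd_base (i : ℕ) (h1 : 1 ≤ i) (ho : i % 2 = 1) :
    abrB i = 3 * 2 ^ (i - 1) :=
  abr_odd_base_general i ho
end

section
/- For every n ≥ 2, the maximum ABR value over n-bit strings is 2^n - 1, and it is attained by a string that is not the all-ones string when n ≥ 3. -/
open Finset

/-!
The odd-indexed bases are `B (2k+1) = 3·4^k` and the even ones `B (2k) = 4^k` for `k ≥ 1`.
Group the bits into pairs `(2k, 2k+1)`. A full pair is read as `B (2k+1) - B (2k)`, so a pair
never contributes more than `B (2k+1) = 3·4^k`, and the pairs below `2m` contribute at most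
`∑_{k<m} 3·4^k = 4^m - 1`; for odd `n` the unpaired top bit adds at most `B (n-1) = 4^m`.
Setting exactly the odd bits and the top bit attains the bound, and that string has `d 0 = 0`.
-/

lemma abrB_eq_of_pos {i : ℕ} (hi : 0 < i) :
    abrB i = 2 ^ (i + 1) - 1 - ∑ j ∈ (range i).filter (· % 2 = 1), abrB j := by
  match i, hi with
  | 1, _ => simp [abrB, filter_singleton]
  | n + 2, _ => rw [abrB, sum_attach]

lemma sum_filter_odd_range {M : Type*} [AddCommMonoid M] (f : ℕ → M) (n : ℕ) :
    ∑ j ∈ (range n).filter (· % 2 = 1), f j = ∑ k ∈ range (n / 2), f (2 * k + 1) := by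
  induction n with
  | zero => simp
  | succ n ih =>
    rw [range_add_one, filter_insert]
    rcases Nat.mod_two_eq_zero_or_one n with h | h
    · rw [if_neg (by omega), ih, show (n + 1) / 2 = n / 2 by omega]
    · rw [if_pos h, sum_insert (by simp), ih, show (n + 1) / 2 = n / 2 + 1 by omega,
        sum_range_succ, show 2 * (n / 2) + 1 = n by omega, add_comm]

lemma sum_range_abrB_two_mul_add_one (k : ℕ) :
    ∑ j ∈ range k, abrB (2 * j + 1) = 4 ^ k - 1 := by
  induction k with
  | zero => simp
  | succ k ih =>
    rw [sum_range_succ, ih, abrB_eq_of_pos (by omega), sum_filter_odd_range,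
      show (2 * k + 1) / 2 = k by omega, ih, show 2 * k + 1 + 1 = 2 * (k + 1) by ring, pow_mul,
      pow_succ]
    have : 1 ≤ 4 ^ k := Nat.one_le_pow _ _ (by norm_num)
    norm_num
    omega

lemma abrB_two_mul {k : ℕ} (hk : k ≠ 0) : abrB (2 * k) = 4 ^ k := by
  rw [abrB_eq_of_pos (by omega), sum_filter_odd_range, show 2 * k / 2 = k by omega,
    sum_range_abrB_two_mul_add_one, pow_succ, pow_mul]
  have : 1 ≤ 4 ^ k := Nat.one_le_pow _ _ (by norm_num)
  norm_num
  omega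

lemma abrB_two_mul_le (k : ℕ) : abrB (2 * k) ≤ abrB (2 * k + 1) := by
  rcases eq_or_ne k 0 with rfl | hk
  · simp [abrB]
  · rw [abrB_two_mul hk, abrB_two_mul_add_one]
    omega

lemma sum_range_two_mul {M : Type*} [AddCommMonoid M] (f : ℕ → M) (m : ℕ) :
    ∑ i ∈ range (2 * m), f i = ∑ k ∈ range m, (f (2 * k) + f (2 * k + 1)) := by
  induction m with
  | zero => simp
  | succ m ih => rw [Nat.mul_succ, sum_range_succ, sum_range_succ, ih, sum_range_succ, add_assoc]

lemma sum_range_three_mul_four_pow (m : ℕ) :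
    ∑ k ∈ range m, (3 * 4 ^ k : ℤ) = 4 ^ m - 1 := by
  rw [← mul_sum, mul_comm, ← geom_sum_mul]
  norm_num

def abrTerm (n : ℕ) (d : ℕ → Bool) (i : ℕ) : ℤ :=
  (-1) ^ abrEps n d i * (cond (d i) 1 0 : ℤ) * (abrB i : ℤ)

lemma abrVal_eq_sum_abrTerm (n : ℕ) (d : ℕ → Bool) :
    abrVal n d = ∑ i ∈ range n, abrTerm n d i := rfl

lemma abrTerm_le (n : ℕ) (d : ℕ → Bool) (i : ℕ) : abrTerm n d i ≤ abrB i := by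
  unfold abrTerm abrEps
  cases d i <;> split_ifs <;> simp

lemma abrTerm_pair_le {n : ℕ} (d : ℕ → Bool) {k : ℕ} (hk : 2 * k + 2 ≤ n) :
    abrTerm n d (2 * k) + abrTerm n d (2 * k + 1) ≤ abrB (2 * k + 1) := by
  have hB := abrB_two_mul_le k
  unfold abrTerm abrEps
  cases d (2 * k) <;> cases d (2 * k + 1) <;> simp [hk]
  omega

lemma sum_range_two_mul_abrTerm_le {n m : ℕ} (d : ℕ → Bool) (hm : 2 * m ≤ n) :
    ∑ i ∈ range (2 * m), abrTerm n d i ≤ 4 ^ m - 1 := by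
  rw [sum_range_two_mul, ← sum_range_three_mul_four_pow]
  refine sum_le_sum fun k hk => ?_
  have := abrTerm_pair_le d (show 2 * k + 2 ≤ n by simp only [mem_range] at hk; omega)
  rw [abrB_two_mul_add_one] at this
  exact_mod_cast this

lemma abrVal_le {n : ℕ} (hn : n ≠ 1) (d : ℕ → Bool) : abrVal n d ≤ 2 ^ n - 1 := by
  rw [abrVal_eq_sum_abrTerm]
  obtain ⟨m, rfl | rfl⟩ := Nat.even_or_odd' n
  · calc ∑ i ∈ range (2 * m), abrTerm (2 * m) d i ≤ 4 ^ m - 1 :=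
          sum_range_two_mul_abrTerm_le d le_rfl
      _ = 2 ^ (2 * m) - 1 := by rw [pow_mul]; norm_num
  · have hlast : abrTerm (2 * m + 1) d (2 * m) ≤ 4 ^ m := by
      have := abrTerm_le (2 * m + 1) d (2 * m)
      rw [abrB_two_mul (by omega)] at this
      exact_mod_cast this
    calc ∑ i ∈ range (2 * m + 1), abrTerm (2 * m + 1) d i
        ≤ (4 ^ m - 1) + 4 ^ m := by
          rw [sum_range_succ]
          exact add_le_add (sum_range_two_mul_abrTerm_le d (by omega)) hlast
      _ = 2 ^ (2 * m + 1) - 1 := by rw [pow_succ, pow_mul]; ring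

def abrMaxBits (n : ℕ) : Fin n → Bool := fun i => i.val % 2 = 1 ∨ i.val + 1 = n

lemma abrTerm_abrMaxBits {n i : ℕ} (hi : i < n) :
    abrTerm n (extBits n (abrMaxBits n)) i =
      if i % 2 = 1 ∨ i + 1 = n then (abrB i : ℤ) else 0 := by
  have hbit : extBits n (abrMaxBits n) i = decide (i % 2 = 1 ∨ i + 1 = n) := by
    simp [extBits, abrMaxBits, hi]
  have heps : abrEps n (extBits n (abrMaxBits n)) i = 0 := by
    refine if_neg fun ⟨_, _, h, _⟩ => ?_
    simp only [hbit, decide_eq_true_eq] at h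
    omega
  unfold abrTerm
  rw [heps, hbit]
  split_ifs <;> simp_all

lemma sum_range_two_mul_abrTerm_abrMaxBits {n m : ℕ} (hm : 2 * m ≤ n) :
    ∑ i ∈ range (2 * m), abrTerm n (extBits n (abrMaxBits n)) i = 4 ^ m - 1 := by
  rw [sum_range_two_mul, ← sum_range_three_mul_four_pow]
  refine sum_congr rfl fun k hk => ?_
  simp only [mem_range] at hk
  rw [abrTerm_abrMaxBits (by omega), abrTerm_abrMaxBits (by omega), if_neg (by omega),
    if_pos (by omega), abrB_two_mul_add_one]
  push_cast
  ring

lemma abrVal_abrMaxBits {n : ℕ} (hn : n ≠ 1) :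
    abrVal n (extBits n (abrMaxBits n)) = 2 ^ n - 1 := by
  rw [abrVal_eq_sum_abrTerm]
  obtain ⟨m, rfl | rfl⟩ := Nat.even_or_odd' n
  · rw [sum_range_two_mul_abrTerm_abrMaxBits le_rfl, pow_mul]
    norm_num
  · rw [sum_range_succ, sum_range_two_mul_abrTerm_abrMaxBits (by omega),
      abrTerm_abrMaxBits (by omega), if_pos (by omega), abrB_two_mul (by omega), pow_succ, pow_mul]
    push_cast
    ring

theorem abr_max_value (n : ℕ) (hn : 2 ≤ n) :
    IsGreatest (Set.range fun d : Fin n → Bool => abrVal n (extBits n d))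
      (2 ^ n - 1) ∧
    (3 ≤ n → ∃ d : Fin n → Bool,
      abrVal n (extBits n d) = 2 ^ n - 1 ∧ d ≠ fun _ => true) := by
  have hn₁ : n ≠ 1 := by omega
  have hmax := abrVal_abrMaxBits hn₁
  refine ⟨⟨⟨abrMaxBits n, hmax⟩, ?_⟩, fun _ => ⟨abrMaxBits n, hmax, fun h => ?_⟩⟩
  · rintro _ ⟨d, rfl⟩
    exact abrVal_le hn₁ _
  · have h₀ := congrFun h ⟨0, by omega⟩
    simp [abrMaxBits] at h₀
    omega
end
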